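/- arXiv:2310.03272 — 3 statements merged into one kernel-verified Lean document; each statement's English description precedes it below -/
import Mathlib

section
/- Let Φ(X; S) = X^{(L)} be the L-layer GNN defined recursively by X^{(0)} = X ∈ ℝ^{N×D_0} and X^{(l+1)} = σ_l(Σ_{k=0}^{K−1} S^k X^{(l)} H_k^{(l)}) with entrywise nonlinearities σ_l and weights H_k^{(l)}. If Ŝ = P S Pᵀ and X̂ = P X for a permutation matrix P (i.e., the two graphs are isomorphic via P), then ‖Φ(X; S) − Pᵀ Φ(X̂; Ŝ)‖_F = 0; in particular the minimum over permutation matrices Q of ‖Φ(X; S) − Q Φ(X̂; Ŝ)‖_F² equals 0 and is attained at Q = Pᵀ. -/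
open Matrix BigOperators

/-- `P` is the 0–1 matrix of a permutation `σ₀` of `Fin N`: `P i j = 1` iff `i = σ₀ j`. -/
def IsPermMatrix {N : ℕ} (P : Matrix (Fin N) (Fin N) ℝ) : Prop :=
  ∃ σ₀ : Equiv.Perm (Fin N), ∀ i j, P i j = if i = σ₀ j then 1 else 0

/-- The `L`-layer GNN: `X⁽⁰⁾ = X` and
`X⁽ˡ⁺¹⁾ = σ_l(∑_{k<K} Sᵏ X⁽ˡ⁾ H_k⁽ˡ⁾)` with entrywise nonlinearities `σ_l`. -/
def gnnOut {N K : ℕ} (D : ℕ → ℕ) (σs : ℕ → ℝ → ℝ)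
    (H : (l : ℕ) → Fin K → Matrix (Fin (D l)) (Fin (D (l + 1))) ℝ)
    (S : Matrix (Fin N) (Fin N) ℝ) (X : Matrix (Fin N) (Fin (D 0)) ℝ) :
    (L : ℕ) → Matrix (Fin N) (Fin (D L)) ℝ
  | 0 => X
  | (L + 1) => (∑ k : Fin K, S ^ (k : ℕ) * gnnOut D σs H S X L * H L k).map (σs L)

/-- The squared Frobenius norm `‖A‖_F² = ∑ᵢⱼ Aᵢⱼ²`. -/
def frobSq {m n : Type*} [Fintype m] [Fintype n] (A : Matrix m n ℝ) : ℝ :=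
  ∑ i, ∑ j, (A i j) ^ 2

/-- The Frobenius norm `‖A‖_F`. -/
noncomputable def frobNorm {m n : Type*} [Fintype m] [Fintype n] (A : Matrix m n ℝ) : ℝ :=
  Real.sqrt (frobSq A)

lemma permMul {N n : ℕ} (P : Matrix (Fin N) (Fin N) ℝ) (σ₀ : Equiv.Perm (Fin N))
    (hP : ∀ i j, P i j = if i = σ₀ j then 1 else 0)
    (M : Matrix (Fin N) (Fin n) ℝ) : P * M = M.submatrix (σ₀.symm) id := by
  ext i j
  simp only [Matrix.mul_apply, hP, Matrix.submatrix_apply, id]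
  rw [Finset.sum_eq_single (σ₀.symm i)]
  · simp
  · intro b _ hb
    rw [if_neg, zero_mul]
    intro h; exact hb (by simp [h])
  · simp

lemma permT {N : ℕ} (P : Matrix (Fin N) (Fin N) ℝ) (σ₀ : Equiv.Perm (Fin N))
    (hP : ∀ i j, P i j = if i = σ₀ j then 1 else 0) :
    ∀ i j, Pᵀ i j = if i = σ₀.symm j then 1 else 0 := by
  intro i j
  simp only [Matrix.transpose_apply, hP]
  congr 1
  simp only [eq_iff_iff]
  constructor
  · intro h; simp [h]
  · intro h; simp [h]

/-- If `Shat = P S Pᵀ` and `Xhat = P X` for a permutation matrix `P`, then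
`‖Φ(X;S) − Pᵀ Φ(Xhat;Shat)‖_F = 0`, and the minimum over permutation matrices `Q` of
`‖Φ(X;S) − Q Φ(Xhat;Shat)‖_F²` equals `0` and is attained at `Q = Pᵀ`. -/
theorem gnn_matches_isomorphic_graphs {N K : ℕ} (D : ℕ → ℕ) (σs : ℕ → ℝ → ℝ)
    (H : (l : ℕ) → Fin K → Matrix (Fin (D l)) (Fin (D (l + 1))) ℝ)
    (S : Matrix (Fin N) (Fin N) ℝ) (X : Matrix (Fin N) (Fin (D 0)) ℝ)
    (P : Matrix (Fin N) (Fin N) ℝ) (hP : IsPermMatrix P) (L : ℕ)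
    (Shat : Matrix (Fin N) (Fin N) ℝ) (Xhat : Matrix (Fin N) (Fin (D 0)) ℝ)
    (hShat : Shat = P * S * Pᵀ) (hXhat : Xhat = P * X) :
    frobNorm (gnnOut D σs H S X L - Pᵀ * gnnOut D σs H Shat Xhat L) = 0 ∧
    IsPermMatrix Pᵀ ∧
    IsLeast {x : ℝ | ∃ Q : Matrix (Fin N) (Fin N) ℝ, IsPermMatrix Q ∧
        x = frobSq (gnnOut D σs H S X L - Q * gnnOut D σs H Shat Xhat L)} 0 ∧
    frobSq (gnnOut D σs H S X L - Pᵀ * gnnOut D σs H Shat Xhat L) = 0 := by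
  obtain ⟨σ₀, hPe⟩ := hP
  have hPTe := permT P σ₀ hPe
  -- PᵀP = 1
  have hPTP : Pᵀ * P = 1 := by
    ext i j
    simp only [Matrix.mul_apply, hPTe, hPe]
    rw [Finset.sum_eq_single (σ₀ j)]
    · by_cases h : i = j
      · simp [h, Matrix.one_apply]
      · rw [if_neg, zero_mul, Matrix.one_apply_ne h]
        intro hc
        exact h (by simpa using hc)
    · intro b _ hb
      rw [if_neg hb, mul_zero]
    · simp
  have hcancel : ∀ {n : ℕ} (M : Matrix (Fin N) (Fin n) ℝ), Pᵀ * (P * M) = M := by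
    intro n M; rw [← Matrix.mul_assoc, hPTP, Matrix.one_mul]
  -- equivariance
  have key : ∀ l, gnnOut D σs H Shat Xhat l = P * gnnOut D σs H S X l := by
    intro l
    induction l with
    | zero => exact hXhat
    | succ l ih =>
      have hpow : ∀ k : ℕ, Shat ^ k = P * S ^ k * Pᵀ := by
        intro k
        induction k with
        | zero =>
          simp only [pow_zero, Matrix.mul_one]
          exact (mul_eq_one_comm.mp hPTP).symm
        | succ k ihk =>
          rw [pow_succ, ihk, hShat, pow_succ]
          simp only [Matrix.mul_assoc, hcancel]
      show (∑ k : Fin K, Shat ^ (k : ℕ) * gnnOut D σs H Shat Xhat l * H l k).map (σs l)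
          = P * (∑ k : Fin K, S ^ (k : ℕ) * gnnOut D σs H S X l * H l k).map (σs l)
      have hsum : (∑ k : Fin K, Shat ^ (k : ℕ) * gnnOut D σs H Shat Xhat l * H l k)
          = P * (∑ k : Fin K, S ^ (k : ℕ) * gnnOut D σs H S X l * H l k) := by
        rw [Matrix.mul_sum]
        refine Finset.sum_congr rfl fun k _ => ?_
        rw [ih, hpow]
        simp only [Matrix.mul_assoc, hcancel]
      rw [hsum, permMul P σ₀ hPe, permMul P σ₀ hPe]
      ext i j
      simp [Matrix.map_apply, Matrix.submatrix_apply]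
  have hzero : gnnOut D σs H S X L - Pᵀ * gnnOut D σs H Shat Xhat L = 0 := by
    rw [key L, ← Matrix.mul_assoc, hPTP, Matrix.one_mul, sub_self]
  have hfrobSq0 : frobSq (gnnOut D σs H S X L - Pᵀ * gnnOut D σs H Shat Xhat L) = 0 := by
    rw [hzero]; simp [frobSq]
  refine ⟨?_, ⟨σ₀.symm, hPTe⟩, ⟨⟨Pᵀ, ⟨σ₀.symm, hPTe⟩, hfrobSq0.symm⟩, ?_⟩, hfrobSq0⟩
  · rw [frobNorm, hfrobSq0, Real.sqrt_zero]
  · rintro x ⟨Q, _, rfl⟩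
    exact Finset.sum_nonneg fun i _ => Finset.sum_nonneg fun j _ => sq_nonneg _
end

section
/- Let S ∈ ℝ^{N×N} be symmetric with orthonormal eigenbasis v_1, …, v_N ∈ ℝ^N and pairwise distinct eigenvalues λ_1, …, λ_N ∈ ℝ, and let x : Ω → ℝ^N be a white random vector on a probability space (E[x_i] = 0, E[x_i x_j] = δ_{ij}, products integrable). Then for every j ∈ {1,…,N} there exist coefficients h_0, …, h_{N−1} ∈ ℝ such that the random vector y := (Σ_{k=0}^{N−1} h_k S^k x)², with the square taken entrywise, satisfies E[y_i] = ((v_j)_i)² = |v_j|_i² for every i ∈ {1,…,N}; that is, a single graph-filter layer with squaring nonlinearity computes, in expectation, the entrywise squared absolute value of any chosen eigenvector of S. -/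
open Matrix MeasureTheory Polynomial

/-!
Write `P n = v n (v n)ᵀ`. Orthonormality makes the `P n` orthogonal idempotents summing to `1`,
so `p(S) = ∑ n, p(λ n) • P n` for every polynomial `p`. Since the eigenvalues are distinct, the
Lagrange basis polynomial of `λ j` has degree `< N` and picks out `P j`, so its coefficients form a
filter with `h(S) x = ⟪v j, x⟫ • v j`.
Whiteness of `x` gives `E ⟪v j, x⟫² = ‖v j‖² = 1`.
-/

namespace Matrix

variable {ι R : Type*} [Fintype ι] [DecidableEq ι] [CommRing R] {v : ι → ι → R}

theorem sum_vecMulVec_self_eq_one_of_orthonormal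
    (horth : ∀ n m, v n ⬝ᵥ v m = if n = m then 1 else 0) :
    ∑ n, vecMulVec (v n) (v n) = 1 := by
  have hrows : of v * (of v)ᵀ = 1 := by
    ext n m
    simpa [mul_apply, one_apply, dotProduct] using horth n m
  -- a square matrix with orthonormal rows also has orthonormal columns
  have hcols : (of v)ᵀ * of v = 1 := mul_eq_one_comm.mp hrows
  ext i i'
  simpa [mul_apply, sum_apply, vecMulVec_apply, one_apply] using congrFun₂ hcols i i'

theorem pow_sum_smul_vecMulVec_of_orthonormal
    (horth : ∀ n m, v n ⬝ᵥ v m = if n = m then 1 else 0) (lam : ι → R) (k : ℕ) :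
    (∑ n, lam n • vecMulVec (v n) (v n)) ^ k = ∑ n, lam n ^ k • vecMulVec (v n) (v n) := by
  induction k with
  | zero => simpa using (sum_vecMulVec_self_eq_one_of_orthonormal horth).symm
  | succ k ih =>
    rw [pow_succ, ih, Finset.sum_mul_sum]
    refine Finset.sum_congr rfl fun n _ => ?_
    rw [Finset.sum_eq_single n]
    · rw [smul_mul_smul_comm, vecMulVec_mul_vecMulVec, horth, if_pos rfl, one_smul, ← pow_succ]
    · intro m _ hmn
      rw [smul_mul_smul_comm, vecMulVec_mul_vecMulVec, horth, if_neg (Ne.symm hmn), zero_smul,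
        vecMulVec_zero, smul_zero]
    · exact fun h => absurd (Finset.mem_univ n) h

theorem aeval_sum_smul_vecMulVec_of_orthonormal
    (horth : ∀ n m, v n ⬝ᵥ v m = if n = m then 1 else 0) (lam : ι → R) (p : R[X]) :
    aeval (∑ n, lam n • vecMulVec (v n) (v n)) p
      = ∑ n, p.eval (lam n) • vecMulVec (v n) (v n) := by
  simp_rw [aeval_eq_sum_range, pow_sum_smul_vecMulVec_of_orthonormal horth, Finset.smul_sum,
    smul_smul, eval_eq_sum_range, Finset.sum_smul]
  exact Finset.sum_comm

theorem exists_sum_smul_pow_eq_vecMulVec {K : Type*} [Field K] {N : ℕ} {v : Fin N → Fin N → K}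
    (horth : ∀ n m, v n ⬝ᵥ v m = if n = m then 1 else 0) {lam : Fin N → K}
    (hlam : Function.Injective lam) (j : Fin N) :
    ∃ h : Fin N → K, ∑ k : Fin N, h k • (∑ n, lam n • vecMulVec (v n) (v n)) ^ (k : ℕ)
      = vecMulVec (v j) (v j) := by
  set p := Lagrange.basis Finset.univ lam j
  have hinj : Set.InjOn lam (Finset.univ : Finset (Fin N)) := hlam.injOn
  have hdeg : p.natDegree < N := by
    rw [Lagrange.natDegree_basis hinj (Finset.mem_univ j), Finset.card_univ, Fintype.card_fin]
    exact Nat.sub_lt j.pos one_pos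
  refine ⟨fun k => p.coeff k, ?_⟩
  rw [Fin.sum_univ_eq_sum_range (fun k => p.coeff k • _ ^ k), ← aeval_eq_sum_range' hdeg,
    aeval_sum_smul_vecMulVec_of_orthonormal horth, Finset.sum_eq_single j]
  · rw [Lagrange.eval_basis_self hinj (Finset.mem_univ j), one_smul]
  · intro n _ hnj
    rw [Lagrange.eval_basis_of_ne (Ne.symm hnj) (Finset.mem_univ n), zero_smul]
  · exact fun h => absurd (Finset.mem_univ j) h

end Matrix

theorem integral_dotProduct_sq_of_white {Ω ι : Type*} [MeasurableSpace Ω] {μ : Measure Ω}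
    [Fintype ι] [DecidableEq ι] {x : Ω → ι → ℝ}
    (hint : ∀ i j, Integrable (fun ω => x ω i * x ω j) μ)
    (hcov : ∀ i j, ∫ ω, x ω i * x ω j ∂μ = if i = j then 1 else 0) (w : ι → ℝ) :
    ∫ ω, (w ⬝ᵥ x ω) ^ 2 ∂μ = w ⬝ᵥ w := by
  have hexpand : ∀ ω, (w ⬝ᵥ x ω) ^ 2 = ∑ m, ∑ l, w m * w l * (x ω m * x ω l) := by
    intro ω
    simp_rw [sq, dotProduct, Finset.sum_mul_sum]
    exact Finset.sum_congr rfl fun _ _ => Finset.sum_congr rfl fun _ _ => by ring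
  simp_rw [hexpand]
  rw [integral_finsetSum _ fun m _ => integrable_finsetSum _ fun l _ => (hint m l).const_mul _]
  simp_rw [integral_finsetSum _ fun l _ => (hint _ l).const_mul _, integral_const_mul, hcov]
  simp [dotProduct]

theorem gnn_computes_abs_eigenvector_general {N : ℕ} {Ω : Type*}
    [MeasureSpace Ω]
    (S : Matrix (Fin N) (Fin N) ℝ)
    (v : Fin N → (Fin N → ℝ)) (lam : Fin N → ℝ)
    (hS : S = ∑ n, lam n • vecMulVec (v n) (v n))
    (horth : ∀ n m, v n ⬝ᵥ v m = if n = m then 1 else 0)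
    (hdist : Function.Injective lam)
    (x : Ω → Fin N → ℝ)
    (hint : ∀ i j : Fin N, Integrable (fun ω => x ω i * x ω j))
    (hcov : ∀ i j : Fin N, (∫ ω, x ω i * x ω j) = if i = j then 1 else 0) :
    ∀ j : Fin N, ∃ h : Fin N → ℝ, ∀ i : Fin N,
      (∫ ω, ((∑ k : Fin N, h k • S ^ (k : ℕ)).mulVec (x ω) i) ^ 2)
        = (v j i) ^ 2 := by
  intro j
  obtain ⟨h, hfilter⟩ := exists_sum_smul_pow_eq_vecMulVec horth hdist j
  refine ⟨h, fun i => ?_⟩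
  calc (∫ ω, ((∑ k : Fin N, h k • S ^ (k : ℕ)).mulVec (x ω) i) ^ 2)
      = ∫ ω, v j i ^ 2 * (v j ⬝ᵥ x ω) ^ 2 := by
        simp_rw [hS, hfilter, vecMulVec_mulVec, Pi.smul_apply, op_smul_eq_mul, mul_pow]
    _ = v j i ^ 2 := by
        rw [integral_const_mul, integral_dotProduct_sq_of_white hint hcov, horth, if_pos rfl,
          mul_one]

/-- Let `S` be symmetric with orthonormal eigenbasis `v₁,…,v_N` and pairwise distinct
eigenvalues, and let `x` be a white random vector. Then for every `j` there exist
coefficients `h₀,…,h_{N−1}` such that the random vector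
`y = (∑_{k<N} h_k Sᵏ x)²` (entrywise square) satisfies `E[yᵢ] = ((vⱼ)ᵢ)²` for all `i`:
a graph-filter layer with squaring nonlinearity computes, in expectation, the
entrywise squared absolute value of any chosen eigenvector of `S`. -/
theorem gnn_computes_abs_eigenvector {N : ℕ} {Ω : Type*}
    [MeasureSpace Ω] [IsProbabilityMeasure (volume : Measure Ω)]
    (S : Matrix (Fin N) (Fin N) ℝ) (hsymm : S.IsSymm)
    (v : Fin N → (Fin N → ℝ)) (lam : Fin N → ℝ)
    (hS : S = ∑ n, lam n • vecMulVec (v n) (v n))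
    (horth : ∀ n m, v n ⬝ᵥ v m = if n = m then 1 else 0)
    (hdist : Function.Injective lam)
    (x : Ω → Fin N → ℝ)
    (hint : ∀ i j : Fin N, Integrable (fun ω => x ω i * x ω j))
    (hmean : ∀ i : Fin N, ∫ ω, x ω i = 0)
    (hcov : ∀ i j : Fin N, (∫ ω, x ω i * x ω j) = if i = j then 1 else 0) :
    ∀ j : Fin N, ∃ h : Fin N → ℝ, ∀ i : Fin N,
      (∫ ω, ((∑ k : Fin N, h k • S ^ (k : ℕ)).mulVec (x ω) i) ^ 2)
        = (v j i) ^ 2 :=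
  gnn_computes_abs_eigenvector_general S v lam hS horth hdist x hint hcov
end

section
/- Let S ∈ ℝ^{N×N} be symmetric, P ∈ ℝ^{N×N} a permutation matrix, and λ ∈ ℝ an eigenvalue of S whose eigenspace is one-dimensional. If v ∈ ℝ^N is a unit vector with S v = λ v and w ∈ ℝ^N is a unit vector with (P S Pᵀ) w = λ w, then |w| = P |v| entrywise, i.e., |w_i| = |(P v)_i| for all i. Hence the absolute-eigenvector node features used by the spectral matching method are permutation equivariant. -/
open Matrix BigOperators

/-- Let `S` be symmetric, `P` a permutation matrix, and `λ` an eigenvalue of `S` with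
one-dimensional eigenspace. If `v` is a unit eigenvector of `S` for `λ` and `w` a unit
eigenvector of `P S Pᵀ` for `λ`, then `|wᵢ| = |(P v)ᵢ|` for all `i`: the
absolute-eigenvector node features are permutation equivariant. -/
theorem abs_eigenvector_permutation_equivariant {N : ℕ}
    (S : Matrix (Fin N) (Fin N) ℝ) (hsymm : S.IsSymm)
    (P : Matrix (Fin N) (Fin N) ℝ) (hP : IsPermMatrix P) (lam : ℝ)
    (hdim : Module.finrank ℝ
      (Module.End.eigenspace (Matrix.toLin' S) lam) = 1)
    (v w : Fin N → ℝ)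
    (hv1 : ∑ i, (v i) ^ 2 = 1) (hw1 : ∑ i, (w i) ^ 2 = 1)
    (hv : S.mulVec v = lam • v)
    (hw : (P * S * Pᵀ).mulVec w = lam • w) :
    ∀ i, |w i| = |(P.mulVec v) i| := by
  obtain ⟨σ, hσ⟩ := hP
  have hPt : ∀ (x : Fin N → ℝ) j, Pᵀ.mulVec x j = x (σ j) := by
    intro x j
    have : ∀ i, Pᵀ j i * x i = (if σ j = i then x i else 0) := by
      intro i
      simp only [Matrix.transpose_apply, hσ]
      by_cases h : i = σ j
      · simp [h]
      · rw [if_neg h, if_neg (fun h' => h h'.symm), zero_mul]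
    simp only [Matrix.mulVec, dotProduct, this, Finset.sum_ite_eq, Finset.mem_univ,
      if_true]
  have hPv : ∀ (x : Fin N → ℝ) i, P.mulVec x i = x (σ.symm i) := by
    intro x i
    have : ∀ j, P i j * x j = (if σ.symm i = j then x j else 0) := by
      intro j
      simp only [hσ]
      by_cases h : i = σ j
      · simp [h]
      · have h' : ¬ σ.symm i = j := fun h' => h (by rw [← h']; simp)
        simp [h, h']
    simp only [Matrix.mulVec, dotProduct, this, Finset.sum_ite_eq, Finset.mem_univ,
      if_true]
  set u : Fin N → ℝ := Pᵀ.mulVec w with hu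
  have hPtP : Pᵀ * P = 1 := by
    ext j k
    simp only [Matrix.mul_apply, Matrix.transpose_apply, hσ, Matrix.one_apply, ite_mul,
      one_mul, zero_mul]
    rw [Finset.sum_ite_eq' Finset.univ (σ j)]
    simp [σ.injective.eq_iff, eq_comm]
  have key : S.mulVec u = lam • u := by
    have h1 : Pᵀ.mulVec ((P * S * Pᵀ).mulVec w) = Pᵀ.mulVec (lam • w) := by rw [hw]
    rw [Matrix.mulVec_mulVec, Matrix.mulVec_smul] at h1
    have e : Pᵀ * (P * S * Pᵀ) = S * Pᵀ := by
      rw [show P * S * Pᵀ = P * (S * Pᵀ) by rw [Matrix.mul_assoc], ← Matrix.mul_assoc,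
        hPtP, Matrix.one_mul]
    rw [e, ← Matrix.mulVec_mulVec] at h1
    exact h1
  have hvE : v ∈ Module.End.eigenspace (Matrix.toLin' S) lam := by
    rw [Module.End.mem_eigenspace_iff, Matrix.toLin'_apply]; exact hv
  have huE : u ∈ Module.End.eigenspace (Matrix.toLin' S) lam := by
    rw [Module.End.mem_eigenspace_iff, Matrix.toLin'_apply]; exact key
  have hvne : (⟨v, hvE⟩ : Module.End.eigenspace (Matrix.toLin' S) lam) ≠ 0 := by
    intro h
    have hv0 : v = 0 := congrArg Subtype.val h
    rw [hv0] at hv1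
    simp at hv1
  obtain ⟨c, hc⟩ := (finrank_eq_one_iff_of_nonzero' (⟨v, hvE⟩ :
    Module.End.eigenspace (Matrix.toLin' S) lam) hvne).mp hdim ⟨u, huE⟩
  have hcu : ∀ j, u j = c * v j := by
    intro j
    have h2 : c • v = u := congrArg Subtype.val hc
    have := congrFun h2 j
    simpa using this.symm
  have hu1 : ∑ j, (u j) ^ 2 = 1 := by
    have : ∀ j, (u j) ^ 2 = (fun i => (w i) ^ 2) (σ j) := by
      intro j; rw [hu, hPt]
    rw [Finset.sum_congr rfl fun j _ => this j, Equiv.sum_comp σ (fun i => (w i) ^ 2)]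
    exact hw1
  have hc2 : c ^ 2 = 1 := by
    have : ∑ j, (u j) ^ 2 = c ^ 2 * ∑ j, (v j) ^ 2 := by
      rw [Finset.mul_sum]
      exact Finset.sum_congr rfl fun j _ => by rw [hcu j]; ring
    rw [hu1, hv1, mul_one] at this
    exact this.symm
  have habs : |c| = 1 := by
    nlinarith [sq_abs c, abs_nonneg c, sq_nonneg (|c| - 1), sq_nonneg (|c| + 1)]
  intro i
  have h1 : w i = u (σ.symm i) := by rw [hu, hPt]; simp
  rw [h1, hcu, abs_mul, habs, one_mul, hPv]
end
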